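/- arXiv:2403.17949 — 5 statements merged into one kernel-verified Lean document; each statement's English description precedes it below -/
import Mathlib

section
/- Let p be a prime, let P be the smallest prime greater than p, let m ≥ 2 be an integer, and let y be a real number with ⌊y · p#⌋ = m · p# − 1. If ⌊y · p# · P⌋ is prime, then ⌊y · p# · P⌋ = m · p# · P − 1 (equivalently, ⌊y · P#⌋ = m · P# − 1). -/
lemma prime_dvd_primorial {q n : ℕ} (hq : q.Prime) (h : q ≤ n) : q ∣ primorial n := by
  unfold primorial
  exact Finset.dvd_prod_of_mem _ (by simp [Finset.mem_filter, Nat.lt_succ_iff, h, hq])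

lemma two_le_primorial {p : ℕ} (hp : p.Prime) : 2 ≤ primorial p :=
  Nat.le_of_dvd (primorial_pos p) (prime_dvd_primorial Nat.prime_two hp.two_le)

/-- Let `p` be a prime, `P` the smallest prime greater than `p`, `m ≥ 2` an
integer, and `y` a real with `⌊y · p#⌋ = m · p# − 1`. If `⌊y · p# · P⌋` is prime, then
`⌊y · p# · P⌋ = m · p# · P − 1` (equivalently `⌊y · P#⌋ = m · P# − 1`, since `P# = p# · P`). -/
theorem stmt_2 (p P : ℕ) (hp : p.Prime) (hP : P.Prime) (hpP : p < P)
    (hmin : ∀ q : ℕ, q.Prime → p < q → P ≤ q)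
    (m : ℤ) (hm : 2 ≤ m) (y : ℝ)
    (hfloor : ⌊y * (primorial p : ℝ)⌋ = m * (primorial p : ℤ) - 1)
    (hprime : Prime ⌊y * (primorial p : ℝ) * (P : ℝ)⌋) :
    ⌊y * (primorial p : ℝ) * (P : ℝ)⌋ = m * (primorial p : ℤ) * (P : ℤ) - 1 := by
  have hx2 : (2 : ℤ) ≤ (primorial p : ℤ) := by exact_mod_cast two_le_primorial hp
  have hPpos : (0 : ℝ) < (P : ℝ) := by exact_mod_cast hP.pos
  have hP2 : (2 : ℤ) ≤ (P : ℤ) := by exact_mod_cast hP.two_le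
  set x : ℤ := (primorial p : ℤ)
  set N : ℤ := ⌊y * (primorial p : ℝ) * (P : ℝ)⌋ with hN
  -- bounds on y * x
  have h1 : (m * x - 1 : ℝ) ≤ y * (primorial p : ℝ) := by
    have := Int.floor_le (y * (primorial p : ℝ))
    rw [hfloor] at this; push_cast at this ⊢; linarith
  have h2 : y * (primorial p : ℝ) < (m * x : ℝ) := by
    have := Int.lt_floor_add_one (y * (primorial p : ℝ))
    rw [hfloor] at this; push_cast at this ⊢; linarith
  have hNlt : N < m * x * P := by
    rw [hN, Int.floor_lt]
    push_cast
    calc y * (primorial p : ℝ) * P < (m * x : ℝ) * P :=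
          mul_lt_mul_of_pos_right h2 hPpos
      _ = (m : ℝ) * x * P := by push_cast; ring
  have hNge : m * x * P - P ≤ N := by
    rw [hN, Int.le_floor]
    push_cast
    nlinarith [mul_le_mul_of_nonneg_right h1 hPpos.le]
  set k : ℤ := m * x * P - N with hk
  have hk1 : 1 ≤ k := by omega
  have hkP : k ≤ P := by omega
  have h4 : (4:ℤ) ≤ m * x := by nlinarith
  have hmxP : 4 * (P : ℤ) ≤ m * x * P := by nlinarith
  have hNbig : (P : ℤ) < N := by omega
  -- generic contradiction step
  have key : ∀ q : ℕ, q.Prime → (q : ℤ) ∣ N → (q : ℤ) < N → False := by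
    intro q hq hdvd hlt
    have hq' : Prime (q : ℤ) := Nat.prime_iff_prime_int.mp hq
    have hassoc := hq'.associated_of_dvd hprime hdvd
    rcases Int.associated_iff.mp hassoc with h | h
    · omega
    · have : (0:ℤ) < q := by exact_mod_cast hq.pos
      omega
  rcases eq_or_lt_of_le hk1 with h | hk2
  · omega
  · exfalso
    rcases eq_or_lt_of_le hkP with hkeq | hklt
    · -- k = P : P ∣ N
      refine key P hP ⟨m * x - 1, ?_⟩ hNbig
      have : N = m * x * P - P := by omega
      rw [this]; ring
    · -- 2 ≤ k < P
      set t : ℕ := k.toNat with ht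
      have ht2 : 2 ≤ t := by omega
      have htk : (t : ℤ) = k := by omega
      have hqprime : t.minFac.Prime := Nat.minFac_prime (by omega)
      set q : ℕ := t.minFac with hqdef
      have hqt : q ≤ t := Nat.minFac_le (by omega)
      have hqt' : (q : ℤ) ≤ (t : ℤ) := by exact_mod_cast hqt
      have hqP : (q : ℤ) < P := by omega
      have hqp : q ≤ p := by
        by_contra hc
        have := hmin q hqprime (by omega)
        have : (P : ℤ) ≤ (q : ℤ) := by exact_mod_cast this
        omega
      have hqx : (q : ℤ) ∣ x :=
        Int.natCast_dvd_natCast.mpr (prime_dvd_primorial hqprime hqp)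
      have hqk : (q : ℤ) ∣ k := by
        have h := Int.natCast_dvd_natCast.mpr (Nat.minFac_dvd t)
        rwa [htk] at h
      have hqN : (q : ℤ) ∣ N := by
        have hmul : (q : ℤ) ∣ m * x * P := Dvd.dvd.mul_right (Dvd.dvd.mul_left hqx m) P
        have : N = m * x * P - k := by omega
        rw [this]; exact dvd_sub hmul hqk
      exact key q hqprime hqN (by omega)
end

section
/- Let y be a real number with y ≥ 3/2 such that ⌊y · p#⌋ is a prime number for every prime p. Then there exists an integer m ≥ 2 such that ⌊y · p#⌋ = m · p# − 1 for every prime p ≥ 3 (and ⌊2y⌋ = 2m − 1). -/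
lemma primorial_succ_eq (n : ℕ) :
    primorial (n+1) = (if (n+1).Prime then n+1 else 1) * primorial n := by
  unfold primorial
  rw [Finset.range_add_one, Finset.filter_insert]
  split_ifs with h
  · rw [Finset.prod_insert (by simp)]
  · rw [one_mul]

lemma two_le_primorial_s3 {n : ℕ} (h : 2 ≤ n) : 2 ≤ primorial n :=
  Nat.le_of_dvd (primorial_pos n) (prime_dvd_primorial Nat.prime_two h)

lemma int_not_prime_of_small_dvd {a : ℤ} {q : ℕ} (hq : q.Prime) (hdvd : (q:ℤ) ∣ a)
    (hlt : (q:ℤ) < a) : ¬ Prime a := by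
  intro hp
  rw [Int.prime_iff_natAbs_prime] at hp
  have h1 : q ∣ a.natAbs := by
    have := Int.natAbs_dvd_natAbs.mpr hdvd
    simpa using this
  have h2 : q = a.natAbs := (Nat.prime_dvd_prime_iff_eq hq hp).mp h1
  have h3 : (a.natAbs : ℤ) = a := Int.natAbs_of_nonneg (by omega)
  omega

/-- If `y ≥ 3/2` and `⌊y · p#⌋` is prime for every prime `p`, then there is an
integer `m ≥ 2` with `⌊y · p#⌋ = m · p# − 1` for every prime `p ≥ 3`, and `⌊2y⌋ = 2m − 1`. -/
theorem stmt_3 (y : ℝ) (hy : (3 : ℝ) / 2 ≤ y)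
    (hprime : ∀ p : ℕ, p.Prime → Prime ⌊y * (primorial p : ℝ)⌋) :
    ∃ m : ℤ, 2 ≤ m ∧
      (∀ p : ℕ, p.Prime → 3 ≤ p → ⌊y * (primorial p : ℝ)⌋ = m * (primorial p : ℤ) - 1) ∧
      ⌊2 * y⌋ = 2 * m - 1 := by
  set m : ℤ := ⌊y⌋ + 1 with hm
  have hym : y < (m : ℝ) := by
    have := Int.lt_floor_add_one y
    push_cast [hm]
    linarith
  have hfl : ((m : ℝ) - 1) ≤ y := by
    have := Int.floor_le y
    push_cast [hm]
    linarith
  have hm2 : 2 ≤ m := by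
    have h1 : (1:ℤ) ≤ ⌊y⌋ := Int.le_floor.mpr (by push_cast; linarith)
    omega
  -- base case
  have hbase : ⌊2 * y⌋ = 2 * m - 1 ∧ 2 * (m:ℝ) - 1 ≤ 2 * y := by
    have hp2 : Prime ⌊2 * y⌋ := by
      have := hprime 2 Nat.prime_two
      have h2 : (primorial 2 : ℝ) = 2 := by norm_num [show primorial 2 = 2 from rfl]
      rwa [h2, mul_comm] at this
    have h3 : (3:ℤ) ≤ ⌊2*y⌋ := Int.le_floor.mpr (by push_cast; linarith)
    have hlt : ⌊2*y⌋ < 2*m := by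
      have : (2:ℝ)*y < 2*m := by linarith
      have := Int.floor_le (2*y)
      have h4 : (⌊2*y⌋ : ℝ) < 2*m := by linarith
      exact_mod_cast h4
    have hge : 2*m - 2 ≤ ⌊2*y⌋ := Int.le_floor.mpr (by push_cast; linarith)
    rcases (by omega : ⌊2*y⌋ = 2*m - 2 ∨ ⌊2*y⌋ = 2*m - 1) with h | h
    · exfalso
      refine int_not_prime_of_small_dvd Nat.prime_two ⟨m - 1, by omega⟩ (by omega) hp2
    · refine ⟨h, ?_⟩
      have := Int.floor_le (2*y)
      rw [h] at this
      push_cast at this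
      linarith
  -- main induction
  have key : ∀ n, 2 ≤ n → (m:ℝ) * (primorial n : ℝ) - 1 ≤ y * (primorial n : ℝ) := by
    intro n hn
    induction n, hn using Nat.le_induction with
    | base =>
      have h2 : (primorial 2 : ℝ) = 2 := by norm_num [show primorial 2 = 2 from rfl]
      rw [h2]
      linarith [hbase.2]
    | succ n hn ih =>
      by_cases h : (n+1).Prime
      · have hP' : primorial (n+1) = (n+1) * primorial n := by
          rw [primorial_succ_eq, if_pos h]
        have hPpos : (0:ℝ) < (primorial n : ℝ) := by exact_mod_cast primorial_pos n
        have hP2 : (2:ℤ) ≤ (primorial n : ℤ) := by exact_mod_cast two_le_primorial_s3 hn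
        have hn3 : (3:ℤ) ≤ (n+1 : ℤ) := by exact_mod_cast h.two_le.lt_of_ne (by omega)
        set n' : ℤ := ⌊y * (primorial (n+1) : ℝ)⌋ with hn'
        have hp' : Prime n' := hprime (n+1) h
        set k : ℤ := m * (primorial (n+1) : ℤ) - n' with hk
        have hfloor1 : (n' : ℝ) ≤ y * (primorial (n+1) : ℝ) := Int.floor_le _
        have hfloor2 : y * (primorial (n+1) : ℝ) < n' + 1 := Int.lt_floor_add_one _
        -- lower bound on y * P'
        have hlow : (m:ℝ) * (primorial (n+1) : ℝ) - (n+1) ≤ y * (primorial (n+1) : ℝ) := by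
          have hc : ((primorial (n+1) : ℕ) : ℝ) = (n+1) * (primorial n : ℝ) := by
            rw [hP']; push_cast; ring
          rw [hc]
          have hpos : (0:ℝ) < (n+1 : ℝ) := by positivity
          nlinarith [ih]
        have hk_le : k ≤ n + 1 := by
          have : (m * (primorial (n+1) : ℤ) - (n+1) - 1 : ℝ) < (n' : ℝ) := by
            push_cast
            linarith
          have h5 : m * (primorial (n+1) : ℤ) - (n+1) - 1 < n' := by exact_mod_cast this
          omega
        have hk_one : k ≤ 1 := by
          by_contra hk2
          push_neg at hk2
          set q : ℕ := k.toNat.minFac with hq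
          have hk2' : 2 ≤ k.toNat := by omega
          have hqp : q.Prime := Nat.minFac_prime (by omega)
          have hqk : (q:ℤ) ∣ k := by
            have := Nat.minFac_dvd k.toNat
            have h6 : (q:ℤ) ∣ (k.toNat : ℤ) := Int.natCast_dvd_natCast.mpr this
            rwa [Int.toNat_of_nonneg (by omega)] at h6
          have hqle : q ≤ n + 1 := le_trans (Nat.minFac_le (by omega)) (by omega)
          have hqP' : (q:ℤ) ∣ (primorial (n+1) : ℤ) :=
            Int.natCast_dvd_natCast.mpr (prime_dvd_primorial hqp hqle)
          have hqn' : (q:ℤ) ∣ n' := by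
            have : n' = m * (primorial (n+1) : ℤ) - k := by omega
            rw [this]
            exact dvd_sub (hqP'.mul_left m) hqk
          have hbig : (q:ℤ) < n' := by
            have hP'z : (primorial (n+1) : ℤ) = (n+1) * (primorial n : ℤ) := by
              exact_mod_cast hP'
            have hq_le : (q:ℤ) ≤ n + 1 := by exact_mod_cast hqle
            have : n' = m * (primorial (n+1) : ℤ) - k := by omega
            rw [this, hP'z]
            nlinarith
          exact int_not_prime_of_small_dvd hqp hqn' hbig hp'
        -- conclude
        have : (m:ℝ) * (primorial (n+1) : ℝ) - 1 ≤ (n' : ℝ) := by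
          have h7 : m * (primorial (n+1) : ℤ) - 1 ≤ n' := by omega
          exact_mod_cast h7
        linarith
      · have hP' : primorial (n+1) = primorial n := by
          rw [primorial_succ_eq, if_neg h, one_mul]
        rw [hP']
        exact ih
  refine ⟨m, hm2, ?_, hbase.1⟩
  intro p hp hp3
  have hk := key p (le_trans (by norm_num) hp3)
  have hPpos : (0:ℝ) < (primorial p : ℝ) := by exact_mod_cast primorial_pos p
  have hub : y * (primorial p : ℝ) < m * (primorial p : ℝ) := by nlinarith
  rw [Int.floor_eq_iff]
  constructor
  · push_cast; linarith
  · push_cast; linarith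
end

section
/- Let y be a real number with y ≥ 3/2 such that ⌊y · p#⌋ is a prime number for every prime p. Then there exists an integer m ≥ 2 such that m · p# − 1 is a prime number for every prime p ≥ 3. -/
theorem dvd_primorial' {r n : ℕ} (hr : r.Prime) (h : r ≤ n) : r ∣ primorial n :=
  Finset.dvd_prod_of_mem _ (by simp [Finset.mem_filter, Nat.lt_succ_iff, h, hr])

theorem primorial_consec {p₀ p : ℕ} (hp : p.Prime) (hlt : p₀ < p)
    (hmax : ∀ r, r.Prime → r < p → r ≤ p₀) : primorial p = primorial p₀ * p := by
  obtain ⟨d, hd⟩ : ∃ d, p = p₀ + d := ⟨p - p₀, by omega⟩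
  subst hd
  rw [primorial_add]
  congr 1
  have : Finset.filter Nat.Prime (Finset.Ico (p₀ + 1) (p₀ + d + 1)) = {p₀ + d} := by
    ext r
    simp only [Finset.mem_filter, Finset.mem_Ico, Finset.mem_singleton]
    constructor
    · rintro ⟨⟨h1, h2⟩, hr⟩
      by_contra hne
      have := hmax r hr (by omega)
      omega
    · rintro rfl
      exact ⟨⟨by omega, by omega⟩, hp⟩
  rw [this, Finset.prod_singleton]

/-- an integer prime that is divisible by a prime `r ≤ B < c` gives a contradiction -/
theorem int_prime_small_factor {c : ℤ} {r : ℕ} (hc : Prime c) (hr : r.Prime)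
    (hdvd : (r : ℤ) ∣ c) (hlt : (r : ℤ) < c) : False := by
  have hrZ : Prime (r : ℤ) := Nat.prime_iff_prime_int.mp hr
  have hassoc := (hrZ.associated_of_dvd hc hdvd)
  rw [Int.associated_iff] at hassoc
  have : (2 : ℤ) ≤ (r : ℤ) := by exact_mod_cast hr.two_le
  omega

/-- If `y ≥ 3/2` and `⌊y · p#⌋` is prime for every prime `p`, then there is an
integer `m ≥ 2` such that `m · p# − 1` is prime for every prime `p ≥ 3`. -/
theorem stmt_4 (y : ℝ) (hy : (3 : ℝ) / 2 ≤ y)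
    (hprime : ∀ p : ℕ, p.Prime → Prime ⌊y * (primorial p : ℝ)⌋) :
    ∃ m : ℤ, 2 ≤ m ∧ ∀ p : ℕ, p.Prime → 3 ≤ p → Prime (m * (primorial p : ℤ) - 1) := by
  have hP2 : primorial 2 = 2 := by decide
  have hP3 : primorial 3 = 6 := by decide
  have hq : Prime ⌊y * ((primorial 2 : ℕ) : ℝ)⌋ := hprime 2 Nat.prime_two
  rw [hP2] at hq
  set q : ℤ := ⌊y * ((2 : ℕ) : ℝ)⌋ with hqdef
  have hq3 : 3 ≤ q := by
    rw [hqdef]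
    exact Int.le_floor.mpr (by push_cast; linarith)
  -- q is odd
  have hqodd : Odd q := by
    rcases Int.even_or_odd q with he | ho
    · exfalso
      obtain ⟨k, hk⟩ := he
      have h2 : q = 2 * k := by omega
      rcases hq.irreducible.isUnit_or_isUnit h2 with h | h
      · rw [Int.isUnit_iff] at h
        omega
      · rw [Int.isUnit_iff] at h
        omega
    · exact ho
  obtain ⟨k, hk⟩ := hqodd
  set m : ℤ := k + 1 with hmdef
  have hm2 : 2 ≤ m := by omega
  have hqm : q = 2 * m - 1 := by omega
  -- floor bounds for q
  have hqle : (q : ℝ) ≤ y * 2 := by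
    have := Int.floor_le (y * ((2 : ℕ) : ℝ)); rw [← hqdef] at this; push_cast at this ⊢; linarith
  have hqlt : y * 2 < (q : ℝ) + 1 := by
    have := Int.lt_floor_add_one (y * ((2 : ℕ) : ℝ)); rw [← hqdef] at this; push_cast at this ⊢
    linarith
  -- key induction
  have key : ∀ p : ℕ, p.Prime → 3 ≤ p →
      ⌊y * ((primorial p : ℕ) : ℝ)⌋ = m * (primorial p : ℤ) - 1 := by
    intro p
    induction p using Nat.strong_induction_on with
    | _ p IH =>
      intro hp hp3
      rcases eq_or_lt_of_le hp3 with h3 | h3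
      · -- base case p = 3
        subst h3
        rw [hP3]
        set c : ℤ := ⌊y * ((6 : ℕ) : ℝ)⌋ with hcdef
        have hc : Prime c := by
          have := hprime 3 Nat.prime_three
          rwa [hP3] at this
        have hc1 : 3 * q ≤ c := by
          rw [hcdef]
          refine Int.le_floor.mpr ?_
          push_cast
          linarith
        have hc2 : c < 3 * q + 3 := by
          rw [hcdef]
          refine Int.floor_lt.mpr ?_
          push_cast
          linarith
        -- c ∈ {3q, 3q+1, 3q+2}
        have hc3q : c ≠ 3 * q := by
          intro heq
          rw [heq] at hc
          exact int_prime_small_factor hc Nat.prime_three ⟨q, by push_cast; ring⟩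
            (by push_cast; omega)
        have hc3q1 : c ≠ 3 * q + 1 := by
          intro heq
          rw [heq] at hc
          exact int_prime_small_factor hc Nat.prime_two ⟨3 * m - 1, by push_cast; omega⟩
            (by push_cast; omega)
        have : c = 3 * q + 2 := by omega
        rw [this]
        push_cast
        omega
      · -- inductive step: p > 3 prime
        have hp5 : 5 ≤ p := by
          have h4 : p ≠ 4 := by rintro rfl; norm_num at hp
          omega
        set S : Finset ℕ := Finset.filter Nat.Prime (Finset.range p) with hSdef
        have h3S : 3 ∈ S := by
          rw [hSdef]
          simp only [Finset.mem_filter, Finset.mem_range]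
          exact ⟨by omega, Nat.prime_three⟩
        have hSne : S.Nonempty := ⟨3, h3S⟩
        set p₀ : ℕ := S.max' hSne with hp₀def
        have hp₀S : p₀ ∈ S := S.max'_mem hSne
        rw [hSdef] at hp₀S
        simp only [Finset.mem_filter, Finset.mem_range] at hp₀S
        obtain ⟨hp₀lt, hp₀prime⟩ := hp₀S
        have hp₀3 : 3 ≤ p₀ := S.le_max' 3 h3S
        have hmax : ∀ r, r.Prime → r < p → r ≤ p₀ := by
          intro r hr hrp
          refine S.le_max' r ?_
          rw [hSdef]
          simp only [Finset.mem_filter, Finset.mem_range]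
          exact ⟨hrp, hr⟩
        have hprim : primorial p = primorial p₀ * p := primorial_consec hp hp₀lt hmax
        have hIH := IH p₀ hp₀lt hp₀prime hp₀3
        set P₀ : ℕ := primorial p₀ with hP₀def
        have hP₀2 : 2 ≤ P₀ := Nat.le_of_dvd (primorial_pos p₀) (dvd_primorial' Nat.prime_two (by omega))
        -- floor bounds from IH
        have hle : ((m * (P₀ : ℤ) - 1 : ℤ) : ℝ) ≤ y * (P₀ : ℝ) := by
          rw [← hIH]; exact Int.floor_le _
        have hlt' : y * (P₀ : ℝ) < ((m * (P₀ : ℤ) : ℤ) : ℝ) := by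
          have := Int.lt_floor_add_one (y * ((P₀ : ℕ) : ℝ))
          rw [hIH] at this
          push_cast at this ⊢
          linarith
        set c : ℤ := ⌊y * ((primorial p : ℕ) : ℝ)⌋ with hcdef
        have hc : Prime c := hprime p hp
        have hcast : ((primorial p : ℕ) : ℝ) = (P₀ : ℝ) * (p : ℝ) := by
          rw [hprim]; push_cast; ring
        have hppos : (0 : ℝ) < (p : ℝ) := by positivity
        have hc1 : m * (P₀ : ℤ) * p - p ≤ c := by
          rw [hcdef]
          refine Int.le_floor.mpr ?_
          rw [hcast]
          push_cast
          push_cast at hle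
          nlinarith
        have hc2 : c < m * (P₀ : ℤ) * p := by
          rw [hcdef]
          have : y * ((primorial p : ℕ) : ℝ) < ((m * (P₀ : ℤ) * p : ℤ) : ℝ) := by
            rw [hcast]
            push_cast
            push_cast at hlt'
            nlinarith
          exact_mod_cast Int.floor_lt.mpr this
        -- show c = m * P₀ * p - 1
        have hgoal : c = m * (P₀ : ℤ) * p - 1 := by
          by_contra hne
          set j : ℤ := m * (P₀ : ℤ) * p - c with hjdef
          have hj2 : 2 ≤ j := by omega
          have hjp : j ≤ p := by omega
          set j' : ℕ := j.toNat with hj'def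
          have hj'2 : 2 ≤ j' := by omega
          have hj'p : j' ≤ p := by omega
          have hjj' : (j' : ℤ) = j := by omega
          set r : ℕ := j'.minFac with hrdef
          have hr : r.Prime := Nat.minFac_prime (by omega)
          have hrj : r ∣ j' := Nat.minFac_dvd j'
          have hrp : r ≤ p := le_trans (Nat.minFac_le (by omega)) hj'p
          have hrP : (r : ℤ) ∣ (primorial p : ℤ) := Int.natCast_dvd_natCast.mpr (dvd_primorial' hr hrp)
          have hrc : (r : ℤ) ∣ c := by
            have h1 : c = m * (primorial p : ℤ) - j := by
              rw [hjdef, hprim]; push_cast; ring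
            have h2 : (r : ℤ) ∣ j := by
              rw [← hjj']; exact_mod_cast Int.natCast_dvd_natCast.mpr hrj
            rw [h1]
            exact dvd_sub (Dvd.dvd.mul_left hrP m) h2
          refine int_prime_small_factor hc hr hrc ?_
          have : (r : ℤ) ≤ p := by exact_mod_cast hrp
          have hPp : 2 ≤ (P₀ : ℤ) := by exact_mod_cast hP₀2
          have hpz : (3 : ℤ) ≤ p := by exact_mod_cast hp3
          nlinarith
        rw [hprim]
        push_cast
        push_cast at hgoal
        linarith
  refine ⟨m, hm2, fun p hp hp3 => ?_⟩
  rw [← key p hp hp3]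
  exact hprime p hp
end

section
/- Let p be a prime number. Then p − θ(p) = (log p) · (Li*(p) − π(p)) + 1 − Σ_{x=2}^{p−1} log((x+1)/x) · (Li*(x) − π(x)), where θ(p) = Σ_{q prime, q ≤ p} log q is Chebyshev's first function, π(x) is the number of primes ≤ x, and Li*(n) = Σ_{x=2}^{n} 1/log x. -/
/-- Chebyshev's first function `θ(n) = Σ_{q prime, q ≤ n} log q`. -/
noncomputable def chebyshevTheta (n : ℕ) : ℝ :=
  ∑ q ∈ Finset.filter Nat.Prime (Finset.range (n + 1)), Real.log q

/-- The discrete logarithmic integral `Li*(n) = Σ_{x=2}^{n} 1 / log x`. -/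
noncomputable def LiStar (n : ℕ) : ℝ :=
  ∑ x ∈ Finset.Icc 2 n, 1 / Real.log x

lemma theta_succ (n : ℕ) : chebyshevTheta (n + 1) =
    chebyshevTheta n + (if (n+1).Prime then Real.log (n+1) else 0) := by
  unfold chebyshevTheta
  rw [Finset.range_add_one, Finset.filter_insert]
  split_ifs with h
  · rw [Finset.sum_insert (by simp)]
    push_cast; ring
  · simp

lemma liStar_succ (n : ℕ) (hn : 1 ≤ n) : LiStar (n + 1) = LiStar n + 1 / Real.log (n+1) := by
  unfold LiStar
  rw [Finset.sum_Icc_succ_top (show 2 ≤ n+1 by omega)]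
  push_cast; ring

lemma pi_succ (n : ℕ) : (Nat.primeCounting (n+1) : ℝ) =
    Nat.primeCounting n + (if (n+1).Prime then 1 else 0) := by
  unfold Nat.primeCounting Nat.primeCounting'
  rw [Nat.count_succ]
  split_ifs <;> push_cast <;> ring

lemma key (n : ℕ) (hn : 2 ≤ n) :
    (n : ℝ) - chebyshevTheta n =
      Real.log n * (LiStar n - (Nat.primeCounting n : ℝ)) + 1 -
        ∑ x ∈ Finset.Icc 2 (n - 1),
          Real.log (((x : ℝ) + 1) / x) * (LiStar x - (Nat.primeCounting x : ℝ)) := by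
  induction n, hn using Nat.le_induction with
  | base =>
    have h2 : Nat.primeCounting 2 = 1 := by decide
    have hl2 : Real.log 2 ≠ 0 := by positivity
    simp only [chebyshevTheta, LiStar, h2]
    norm_num [Finset.sum_filter, Finset.sum_range_succ, Finset.Icc_self]
    field_simp
    ring
  | succ n hn ih =>
    have hn1 : (1:ℕ) ≤ n := by omega
    have hlog : Real.log (n+1) ≠ 0 := by
      have : (1:ℝ) < (n:ℝ)+1 := by
        have : (2:ℝ) ≤ n := by exact_mod_cast hn
        linarith
      exact ne_of_gt (Real.log_pos this)
    have hsum : ∑ x ∈ Finset.Icc 2 (n + 1 - 1),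
          Real.log (((x : ℝ) + 1) / x) * (LiStar x - (Nat.primeCounting x : ℝ))
        = (∑ x ∈ Finset.Icc 2 (n - 1),
          Real.log (((x : ℝ) + 1) / x) * (LiStar x - (Nat.primeCounting x : ℝ)))
          + Real.log (((n : ℝ) + 1) / n) * (LiStar n - (Nat.primeCounting n : ℝ)) := by
      have : n + 1 - 1 = (n-1) + 1 := by omega
      rw [this, Finset.sum_Icc_succ_top (show 2 ≤ (n-1)+1 by omega),
        show (n-1)+1 = n from by omega]
    have hlogdiv : Real.log (((n : ℝ) + 1) / n) = Real.log (n+1) - Real.log n := by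
      rw [Real.log_div (by positivity) (by positivity)]
    rw [hsum, theta_succ, liStar_succ n hn1, pi_succ, hlogdiv]
    push_cast
    split_ifs with h
    · field_simp at ih ⊢; linarith [ih]
    · field_simp at ih ⊢; linarith [ih]

/-- For a prime `p`,
`p − θ(p) = (log p)·(Li*(p) − π(p)) + 1 − Σ_{x=2}^{p−1} log((x+1)/x)·(Li*(x) − π(x))`,
where `π` is the prime counting function. -/
theorem stmt_8 (p : ℕ) (hp : p.Prime) :
    (p : ℝ) - chebyshevTheta p =
      Real.log p * (LiStar p - (Nat.primeCounting p : ℝ)) + 1 -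
        ∑ x ∈ Finset.Icc 2 (p - 1),
          Real.log (((x : ℝ) + 1) / x) * (LiStar x - (Nat.primeCounting x : ℝ)) := by
  exact key p hp.two_le
end

section
/- Let y be a real number with 1 ≤ y < 3/2 such that ⌊6y⌋, ⌊30y⌋, ⌊210y⌋, and ⌊2310y⌋ are all prime. Then either 2897/2310 ≤ y < 2898/2310 or 2903/2310 ≤ y < 2904/2310. Consequently ⌊6y⌋ = 7, ⌊30y⌋ = 37, ⌊210y⌋ = 263, and ⌊2310y⌋ ∈ {2897, 2903}. -/
lemma floor_bounds {y : ℝ} {n : ℤ} (h : ⌊y⌋ = n) :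
    (n : ℝ) ≤ y ∧ y < n + 1 := by
  constructor
  · have := Int.floor_le y; rwa [h] at this
  · have := Int.lt_floor_add_one y; rwa [h] at this

/-- If `1 ≤ y < 3/2` and `⌊6y⌋, ⌊30y⌋, ⌊210y⌋, ⌊2310y⌋` are all prime, then
`2897/2310 ≤ y < 2898/2310` or `2903/2310 ≤ y < 2904/2310`; consequently `⌊6y⌋ = 7`,
`⌊30y⌋ = 37`, `⌊210y⌋ = 263`, and `⌊2310y⌋ ∈ {2897, 2903}`. -/
theorem stmt_10 (y : ℝ) (hy1 : 1 ≤ y) (hy2 : y < 3 / 2)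
    (h6 : Prime ⌊6 * y⌋) (h30 : Prime ⌊30 * y⌋) (h210 : Prime ⌊210 * y⌋)
    (h2310 : Prime ⌊2310 * y⌋) :
    ((2897 / 2310 : ℝ) ≤ y ∧ y < 2898 / 2310 ∨ (2903 / 2310 : ℝ) ≤ y ∧ y < 2904 / 2310) ∧
    ⌊6 * y⌋ = 7 ∧ ⌊30 * y⌋ = 37 ∧ ⌊210 * y⌋ = 263 ∧
    (⌊2310 * y⌋ = 2897 ∨ ⌊2310 * y⌋ = 2903) := by
  have e6 : ⌊6 * y⌋ = 7 := by
    have hl : (6:ℤ) ≤ ⌊6 * y⌋ := Int.le_floor.mpr (by push_cast; linarith)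
    have hu : ⌊6 * y⌋ < 9 := Int.floor_lt.mpr (by push_cast; linarith)
    set n := ⌊6 * y⌋ with hn
    interval_cases n <;> first | rfl | norm_num at h6
  obtain ⟨l6, u6⟩ := floor_bounds e6
  norm_num at l6 u6
  have e30 : ⌊30 * y⌋ = 37 := by
    have hl : (35:ℤ) ≤ ⌊30 * y⌋ := Int.le_floor.mpr (by push_cast; linarith)
    have hu : ⌊30 * y⌋ < 40 := Int.floor_lt.mpr (by push_cast; linarith)
    set n := ⌊30 * y⌋ with hn
    interval_cases n <;> first | rfl | norm_num at h30
  obtain ⟨l30, u30⟩ := floor_bounds e30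
  norm_num at l30 u30
  have e210 : ⌊210 * y⌋ = 263 := by
    have hl : (259:ℤ) ≤ ⌊210 * y⌋ := Int.le_floor.mpr (by push_cast; linarith)
    have hu : ⌊210 * y⌋ < 266 := Int.floor_lt.mpr (by push_cast; linarith)
    set n := ⌊210 * y⌋ with hn
    interval_cases n <;> first | rfl | norm_num at h210
  obtain ⟨l210, u210⟩ := floor_bounds e210
  norm_num at l210 u210
  have e2310 : ⌊2310 * y⌋ = 2897 ∨ ⌊2310 * y⌋ = 2903 := by
    have hl : (2893:ℤ) ≤ ⌊2310 * y⌋ := Int.le_floor.mpr (by push_cast; linarith)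
    have hu : ⌊2310 * y⌋ < 2904 := Int.floor_lt.mpr (by push_cast; linarith)
    set n := ⌊2310 * y⌋ with hn
    interval_cases n <;> first | (left; rfl) | (right; rfl) | norm_num at h2310
  refine ⟨?_, e6, e30, e210, e2310⟩
  rcases e2310 with h | h <;> obtain ⟨l, u⟩ := floor_bounds h <;> norm_num at l u
  · left; constructor <;> [linarith; linarith]
  · right; constructor <;> [linarith; linarith]
end
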